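/- arXiv:2005.06571 — 6 statements merged into one kernel-verified Lean document; each statement's English description precedes it below -/
import Mathlib

section
/- Let Δt > 0, σ > 0, and a, b, c, K₀ ∈ ℝ. For each ε > 0 let K(ε) be the unique real number satisfying the implicit-explicit Euler update (K(ε) − K₀)/Δt = −a/ε − (b + σ·K(ε))/ε² − c·K₀, i.e. K(ε) = (K₀ − Δt·a/ε − Δt·b/ε² − Δt·c·K₀)/(1 + Δt·σ/ε²). Then K(ε) tends to −b/σ as ε → 0⁺. -/
open Filter Topology

/-! Multiplying numerator and denominator of the update by `ε²` turns it into a rational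
function of `ε` whose denominator `ε² + Δt·σ` does not vanish at `ε = 0`; it is therefore
continuous there, and its value at `0` is `−Δt·b/(Δt·σ) = −b/σ`. -/

theorem imex_step_eq_mul_sq {Δt σ a b c K₀ ε : ℝ} (hε : ε ≠ 0) :
    (K₀ - Δt * a / ε - Δt * b / ε ^ 2 - Δt * c * K₀) / (1 + Δt * σ / ε ^ 2) =
      (ε ^ 2 * K₀ - Δt * a * ε - Δt * b - Δt * c * K₀ * ε ^ 2) / (ε ^ 2 + Δt * σ) := by
  rw [← mul_div_mul_right _ _ (pow_ne_zero 2 hε)]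
  congr 1 <;> field_simp

theorem tendsto_imex_step_mul_sq {Δt σ : ℝ} (a b c K₀ : ℝ) (hΔt : Δt ≠ 0)
    (hσ : σ ≠ 0) :
    Tendsto (fun ε : ℝ ↦
        (ε ^ 2 * K₀ - Δt * a * ε - Δt * b - Δt * c * K₀ * ε ^ 2) / (ε ^ 2 + Δt * σ))
      (𝓝 0) (𝓝 (-b / σ)) := by
  have hden : (0 : ℝ) ^ 2 + Δt * σ ≠ 0 := by simp [hΔt, hσ]
  have hval : ((0 : ℝ) ^ 2 * K₀ - Δt * a * 0 - Δt * b - Δt * c * K₀ * 0 ^ 2) /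
      (0 ^ 2 + Δt * σ) = -b / σ := by
    rw [div_eq_div_iff hden hσ]
    ring
  rw [← hval]
  exact ContinuousAt.tendsto (by fun_prop (disch := exact hden))

/-- One IMEX (forward-backward) Euler step of the stiff K-step equation: as `ε → 0⁺`,
the update `K(ε) = (K₀ − Δt·a/ε − Δt·b/ε² − Δt·c·K₀)/(1 + Δt·σ/ε²)` tends to `−b/σ`. -/
theorem imex_euler_K_step_limit (Δt σ a b c K₀ : ℝ) (hΔt : 0 < Δt) (hσ : 0 < σ)
    (K : ℝ → ℝ)
    (hK : ∀ ε : ℝ, 0 < ε →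
      K ε = (K₀ - Δt * a / ε - Δt * b / ε ^ 2 - Δt * c * K₀) / (1 + Δt * σ / ε ^ 2)) :
    Tendsto K (nhdsWithin 0 (Set.Ioi 0)) (nhds (-b / σ)) := by
  refine ((tendsto_imex_step_mul_sq a b c K₀ hΔt.ne' hσ.ne').mono_left
    nhdsWithin_le_nhds).congr' ?_
  filter_upwards [self_mem_nhdsWithin] with ε hε
  rw [hK ε hε, imex_step_eq_mul_sq hε.ne']
end

section
/- Let r ≥ 1, let A be a symmetric positive definite r×r real matrix, let Δt > 0, and let b, c, d, L₀ ∈ ℝʳ. Then for every ε > 0 the matrix ε²·I + Δt·A is invertible, and the vector L(ε) := (ε²·I + Δt·A)⁻¹ (ε²·L₀ − ε·Δt·c − Δt·b − ε²·Δt·d) converges to −A⁻¹ b as ε → 0⁺. -/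
/-!
`ε ↦ ε²·I + Δt·A` is continuous with the invertible value `Δt·A` at `ε = 0`, and matrix
inversion is continuous at invertible matrices, so `L(ε)` extends continuously to `ε = 0`;
the limit is `(Δt·A)⁻¹ (−Δt·b) = −A⁻¹ b`.
-/

open Filter Matrix

theorem ContinuousAt.matrix_mulVec {X m n R : Type*} [TopologicalSpace X] [Fintype n]
    [TopologicalSpace R] [NonUnitalNonAssocSemiring R] [ContinuousAdd R] [ContinuousMul R]
    {f : X → Matrix m n R} {g : X → n → R} {x : X} (hf : ContinuousAt f x)
    (hg : ContinuousAt g x) : ContinuousAt (fun y => f y *ᵥ g y) x :=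
  (continuous_fst.matrix_mulVec continuous_snd).continuousAt.comp (hf.prodMk hg)

section

variable {X n K : Type*} [TopologicalSpace X] [Fintype n] [DecidableEq n] [Field K]

theorem ContinuousAt.matrix_inv [TopologicalSpace K] [IsTopologicalDivisionRing K]
    {f : X → Matrix n n K} {x : X} (hf : ContinuousAt f x) (hdet : IsUnit (f x).det) :
    ContinuousAt (fun y => (f y)⁻¹) x :=
  ContinuousAt.comp (g := Inv.inv) (continuousAt_matrix_inv (f x) <| by
    simpa only [Ring.inverse_eq_inv'] using continuousAt_inv₀ hdet.ne_zero) hf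

theorem Matrix.inv_smul_mulVec_smul {A : Matrix n n K} (hA : IsUnit A.det) {t : K} (ht : t ≠ 0)
    (v : n → K) : (t • A)⁻¹ *ᵥ (t • v) = A⁻¹ *ᵥ v := by
  have := invertibleOfNonzero ht
  rw [Matrix.inv_smul (A := A) t hA, smul_mulVec, mulVec_smul, smul_smul, invOf_mul_self,
    one_smul]

end

theorem Matrix.PosDef.smul_one_add_smul {n : Type*} [Fintype n] [DecidableEq n]
    {A : Matrix n n ℝ} (hA : A.PosDef) {s t : ℝ} (hs : 0 < s) (ht : 0 < t) :
    (s • 1 + t • A).PosDef :=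
  (PosDef.one.smul hs).add (hA.smul ht)

theorem imex_euler_L_step_limit_general (r : ℕ)
    (A : Matrix (Fin r) (Fin r) ℝ) (hA : A.PosDef) (Δt : ℝ) (hΔt : 0 < Δt)
    (b c d L₀ : Fin r → ℝ) :
    (∀ ε : ℝ, 0 < ε → IsUnit (ε ^ 2 • (1 : Matrix (Fin r) (Fin r) ℝ) + Δt • A)) ∧
    Tendsto
      (fun ε : ℝ =>
        (ε ^ 2 • (1 : Matrix (Fin r) (Fin r) ℝ) + Δt • A)⁻¹ *ᵥ
          (ε ^ 2 • L₀ - (ε * Δt) • c - Δt • b - (ε ^ 2 * Δt) • d))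
      (nhdsWithin 0 (Set.Ioi 0)) (nhds (-(A⁻¹ *ᵥ b))) := by
  refine ⟨fun ε hε => (hA.smul_one_add_smul (by positivity) hΔt).isUnit, ?_⟩
  have hinv : ContinuousAt
      (fun ε : ℝ => (ε ^ 2 • (1 : Matrix (Fin r) (Fin r) ℝ) + Δt • A)⁻¹) 0 :=
    ContinuousAt.matrix_inv (by fun_prop) <| by
      simpa using (isUnit_iff_isUnit_det _).mp (hA.smul hΔt).isUnit
  have hrhs : ContinuousAt
      (fun ε : ℝ => ε ^ 2 • L₀ - (ε * Δt) • c - Δt • b - (ε ^ 2 * Δt) • d) 0 := by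
    fun_prop
  have hval : (Δt • A)⁻¹ *ᵥ (-(Δt • b)) = -(A⁻¹ *ᵥ b) := by
    rw [← smul_neg, inv_smul_mulVec_smul ((isUnit_iff_isUnit_det A).mp hA.isUnit) hΔt.ne',
      mulVec_neg]
  simpa [hval] using
    (hinv.matrix_mulVec hrhs).tendsto.mono_left (nhdsWithin_le_nhds (s := Set.Ioi 0))

/-- IMEX Euler update of the L-step: for a symmetric positive definite matrix `A` and
`Δt > 0`, the matrix `ε²·I + Δt·A` is invertible for every `ε > 0`, and
`L(ε) = (ε²·I + Δt·A)⁻¹ (ε²·L₀ − ε·Δt·c − Δt·b − ε²·Δt·d)` converges to `−A⁻¹ b`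
as `ε → 0⁺`. -/
theorem imex_euler_L_step_limit (r : ℕ) (hr : 1 ≤ r)
    (A : Matrix (Fin r) (Fin r) ℝ) (hA : A.PosDef) (Δt : ℝ) (hΔt : 0 < Δt)
    (b c d L₀ : Fin r → ℝ) :
    (∀ ε : ℝ, 0 < ε → IsUnit (ε ^ 2 • (1 : Matrix (Fin r) (Fin r) ℝ) + Δt • A)) ∧
    Tendsto
      (fun ε : ℝ =>
        (ε ^ 2 • (1 : Matrix (Fin r) (Fin r) ℝ) + Δt • A)⁻¹ *ᵥ
          (ε ^ 2 • L₀ - (ε * Δt) • c - Δt • b - (ε ^ 2 * Δt) • d))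
      (nhdsWithin 0 (Set.Ioi 0)) (nhds (-(A⁻¹ *ᵥ b))) :=
  imex_euler_L_step_limit_general r A hA Δt hΔt b c d L₀
end

section
/- Let r ≥ 1, let A be a symmetric positive definite r×r real matrix, let Δt > 0, and let S₀, M, N, P be r×r real matrices. Then there exists ε₀ > 0 such that for all 0 < ε < ε₀ the matrix ε²·I − Δt·A is invertible, and the matrix S(ε) := (ε²·I − Δt·A)⁻¹ (ε²·S₀ + ε·Δt·M + Δt·N + ε²·Δt·P) converges to −A⁻¹ N as ε → 0⁺. -/
/-!
As `ε → 0` the system matrix `ε²·I − Δt·A` tends to `−Δt·A`, which is invertible because `A` is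
positive definite. Invertibility is an open condition and matrix inversion is continuous at
invertible matrices, so `S(ε)` tends to `(−Δt·A)⁻¹ (Δt·N) = −A⁻¹ N`.
-/

open Filter Matrix Topology

namespace Matrix

variable {X n 𝕜 : Type*} [Fintype n] [DecidableEq n] [Field 𝕜]

theorem inv_neg_smul_mul_smul {c : 𝕜} (hc : c ≠ 0) (A N : Matrix n n 𝕜) :
    (-(c • A))⁻¹ * (c • N) = -(A⁻¹ * N) := by
  rw [← neg_smul]
  by_cases hA : IsUnit A.det
  · have := invertibleOfNonzero (neg_ne_zero.2 hc)
    rw [inv_smul A (-c) hA, invOf_eq_inv]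
    simp [smul_smul, hc]
  · have hcA : ¬IsUnit (-c • A).det := by
      rw [det_smul]
      exact fun h => hA (isUnit_of_mul_isUnit_right h)
    rw [nonsing_inv_apply_not_isUnit _ hA, nonsing_inv_apply_not_isUnit _ hcA]
    simp

variable [TopologicalSpace 𝕜] [IsTopologicalDivisionRing 𝕜] {l : Filter X} {f : X → Matrix n n 𝕜}
  {B : Matrix n n 𝕜}

theorem _root_.Filter.Tendsto.eventually_isUnit_matrix [T1Space 𝕜] (hf : Tendsto f l (𝓝 B))
    (hB : IsUnit B) : ∀ᶠ x in l, IsUnit (f x) := by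
  have hdet : Tendsto (fun x => (f x).det) l (𝓝 B.det) :=
    (continuous_id.matrix_det.tendsto B).comp hf
  filter_upwards [hdet.eventually_ne ((isUnit_iff_isUnit_det B).1 hB).ne_zero] with x hx
  exact (isUnit_iff_isUnit_det _).2 hx.isUnit

theorem _root_.Filter.Tendsto.matrix_inv (hf : Tendsto f l (𝓝 B)) (hB : IsUnit B) :
    Tendsto (fun x => (f x)⁻¹) l (𝓝 B⁻¹) := by
  refine (continuousAt_matrix_inv B ?_).tendsto.comp hf
  simpa only [Ring.inverse_eq_inv'] using
    continuousAt_inv₀ ((isUnit_iff_isUnit_det B).1 hB).ne_zero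

end Matrix

theorem imex_euler_S_step_limit_general (r : ℕ)
    (A : Matrix (Fin r) (Fin r) ℝ) (hA : A.PosDef) (Δt : ℝ) (hΔt : 0 < Δt)
    (S₀ M N P : Matrix (Fin r) (Fin r) ℝ) :
    (∃ ε₀ : ℝ, 0 < ε₀ ∧ ∀ ε : ℝ, 0 < ε → ε < ε₀ →
      IsUnit (ε ^ 2 • (1 : Matrix (Fin r) (Fin r) ℝ) - Δt • A)) ∧
    Tendsto
      (fun ε : ℝ =>
        (ε ^ 2 • (1 : Matrix (Fin r) (Fin r) ℝ) - Δt • A)⁻¹ *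
          (ε ^ 2 • S₀ + (ε * Δt) • M + Δt • N + (ε ^ 2 * Δt) • P))
      (nhdsWithin 0 (Set.Ioi 0)) (nhds (-(A⁻¹ * N))) := by
  have hsystem : Tendsto (fun ε : ℝ => ε ^ 2 • (1 : Matrix (Fin r) (Fin r) ℝ) - Δt • A)
      (𝓝[>] 0) (𝓝 (-(Δt • A))) :=
    ((by fun_prop : Continuous fun ε : ℝ =>
      ε ^ 2 • (1 : Matrix (Fin r) (Fin r) ℝ) - Δt • A).tendsto' 0 _ (by simp)).mono_left
        nhdsWithin_le_nhds
  have hrhs : Tendsto (fun ε : ℝ => ε ^ 2 • S₀ + (ε * Δt) • M + Δt • N + (ε ^ 2 * Δt) • P)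
      (𝓝[>] 0) (𝓝 (Δt • N)) :=
    ((by fun_prop : Continuous fun ε : ℝ =>
      ε ^ 2 • S₀ + (ε * Δt) • M + Δt • N + (ε ^ 2 * Δt) • P).tendsto' 0 _ (by simp)).mono_left
        nhdsWithin_le_nhds
  have hunit : IsUnit (-(Δt • A)) := (hA.isUnit.smul (Units.mk0 Δt hΔt.ne')).neg
  refine ⟨?_, ?_⟩
  · obtain ⟨ε₀, hε₀, h⟩ := (nhdsGT_basis 0).eventually_iff.1
      (hsystem.eventually_isUnit_matrix hunit)
    exact ⟨ε₀, hε₀, fun ε h₀ h₁ => h ⟨h₀, h₁⟩⟩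
  · simpa only [inv_neg_smul_mul_smul hΔt.ne'] using (hsystem.matrix_inv hunit).mul hrhs

/-- IMEX Euler update of the S-step: for a symmetric positive definite matrix `A` and
`Δt > 0`, there is `ε₀ > 0` such that `ε²·I − Δt·A` is invertible for all `0 < ε < ε₀`,
and `S(ε) = (ε²·I − Δt·A)⁻¹ (ε²·S₀ + ε·Δt·M + Δt·N + ε²·Δt·P)` converges to `−A⁻¹ N`
as `ε → 0⁺`. -/
theorem imex_euler_S_step_limit (r : ℕ) (hr : 1 ≤ r)
    (A : Matrix (Fin r) (Fin r) ℝ) (hA : A.PosDef) (Δt : ℝ) (hΔt : 0 < Δt)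
    (S₀ M N P : Matrix (Fin r) (Fin r) ℝ) :
    (∃ ε₀ : ℝ, 0 < ε₀ ∧ ∀ ε : ℝ, 0 < ε → ε < ε₀ →
      IsUnit (ε ^ 2 • (1 : Matrix (Fin r) (Fin r) ℝ) - Δt • A)) ∧
    Tendsto
      (fun ε : ℝ =>
        (ε ^ 2 • (1 : Matrix (Fin r) (Fin r) ℝ) - Δt • A)⁻¹ *
          (ε ^ 2 • S₀ + (ε * Δt) • M + Δt • N + (ε ^ 2 * Δt) • P))
      (nhdsWithin 0 (Set.Ioi 0)) (nhds (-(A⁻¹ * N))) :=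
  imex_euler_S_step_limit_general r A hA Δt hΔt S₀ M N P
end

section
/- Let (Ω, μ) and (Ω′, ν) be measure spaces, let X₁, …, X_r ∈ L²(Ω, μ) and V₁, …, V_r ∈ L²(Ω′, ν) be orthonormal families of real-valued functions, and let σ : Ω → ℝ be measurable with 0 < σ_min ≤ σ(x) ≤ σ_max < ∞ for μ-a.e. x. Let S* be an r×r real matrix and define h(x, v) := Σ_{i,j=1}^r X_i(x) S*_{ij} V_j(v). If an r×r real matrix S satisfies, for all i, j, the Galerkin system Σ_{k=1}^r (∫_Ω σ X_i X_k dμ) S_{kj} = ∫_Ω ∫_{Ω′} X_i(x) σ(x) h(x, v) V_j(v) dν(v) dμ(x), then S = S*. -/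
/-!
Orthonormality of `V` collapses the inner integral of the right-hand side, which becomes
`G S*` for the `σ`-weighted Gram matrix `G_{ik} = ∫ σ X_i X_k dμ` of `X`. Orthonormality of `X`
and `σ ≥ σmin > 0` give `cᵀ G c = ∫ σ (Σ c_k X_k)² ≥ σmin |c|²`, so `G` is positive definite,
hence invertible, and `G S = G S*` forces `S = S*`.
-/

open MeasureTheory Matrix

theorem MeasureTheory.MemLp.integrable_bdd_mul_mul {α : Type*} [MeasurableSpace α]
    {μ : Measure α} {σ f g : α → ℝ} {M : ℝ} (hf : MemLp f 2 μ) (hg : MemLp g 2 μ)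
    (hσ : AEStronglyMeasurable σ μ) (hσM : ∀ᵐ x ∂μ, ‖σ x‖ ≤ M) :
    Integrable (fun x => σ x * f x * g x) μ := by
  simpa only [mul_assoc, Pi.mul_apply] using (hf.integrable_mul hg).bdd_mul hσ hσM

section Orthonormal

variable {α ι : Type*} [MeasurableSpace α] {μ : Measure α} [Fintype ι] {X : ι → α → ℝ}

theorem memLp_sum_mul (hX : ∀ i, MemLp (X i) 2 μ) (a : ι → ℝ) :
    MemLp (fun x => ∑ k, a k * X k x) 2 μ :=
  memLp_finsetSum _ fun k _ => (hX k).const_mul (a k)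

theorem integral_sum_mul_of_orthonormal [DecidableEq ι] (hX : ∀ i, MemLp (X i) 2 μ)
    (hortho : ∀ i k, ∫ x, X i x * X k x ∂μ = if i = k then 1 else 0) (a : ι → ℝ) (j : ι) :
    ∫ x, (∑ k, a k * X k x) * X j x ∂μ = a j := by
  have hXX (k : ι) : Integrable (fun x => X k x * X j x) μ := (hX k).integrable_mul (hX j)
  simp_rw [Finset.sum_mul, mul_assoc]
  rw [integral_finsetSum _ fun k _ => (hXX k).const_mul (a k)]
  simp [integral_const_mul, hortho]

theorem integral_sum_mul_sq_of_orthonormal [DecidableEq ι] (hX : ∀ i, MemLp (X i) 2 μ)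
    (hortho : ∀ i k, ∫ x, X i x * X k x ∂μ = if i = k then 1 else 0) (a : ι → ℝ) :
    ∫ x, (∑ k, a k * X k x) ^ 2 ∂μ = a ⬝ᵥ a := by
  have hfX (j : ι) : Integrable (fun x => (∑ k, a k * X k x) * X j x) μ :=
    (memLp_sum_mul hX a).integrable_mul (hX j)
  simp_rw [sq, Finset.mul_sum (s := Finset.univ) (f := fun k => a k * X k _),
    mul_left_comm _ (a _)]
  rw [integral_finsetSum _ fun j _ => (hfX j).const_mul (a j)]
  simp [integral_const_mul, integral_sum_mul_of_orthonormal hX hortho, dotProduct]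

end Orthonormal

section WeightedGram

variable {α ι : Type*} [MeasurableSpace α] {μ : Measure α} {X : ι → α → ℝ} {σ : α → ℝ} {M : ℝ}

noncomputable def weightedGram (μ : Measure α) (σ : α → ℝ) (X : ι → α → ℝ) : Matrix ι ι ℝ :=
  Matrix.of fun i k => ∫ x, σ x * X i x * X k x ∂μ

theorem weightedGram_isHermitian : (weightedGram μ σ X).IsHermitian := by
  ext i k
  simp only [conjTranspose_apply, star_trivial, weightedGram, of_apply, mul_right_comm]

theorem weightedGram_mulVec_apply [Fintype ι] (hX : ∀ i, MemLp (X i) 2 μ)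
    (hσ : AEStronglyMeasurable σ μ) (hσM : ∀ᵐ x ∂μ, ‖σ x‖ ≤ M) (b : ι → ℝ) (i : ι) :
    (weightedGram μ σ X *ᵥ b) i = ∫ x, σ x * X i x * ∑ k, b k * X k x ∂μ := by
  simp_rw [Finset.mul_sum, mul_left_comm _ (b _)]
  have hint (k : ι) : Integrable (fun x => b k * (σ x * X i x * X k x)) μ :=
    ((hX i).integrable_bdd_mul_mul (hX k) hσ hσM).const_mul (b k)
  rw [integral_finsetSum _ fun k _ => hint k]
  simp [mulVec, dotProduct, weightedGram, integral_const_mul, mul_comm]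

theorem dotProduct_weightedGram_mulVec [Fintype ι] (hX : ∀ i, MemLp (X i) 2 μ)
    (hσ : AEStronglyMeasurable σ μ) (hσM : ∀ᵐ x ∂μ, ‖σ x‖ ≤ M) (c : ι → ℝ) :
    c ⬝ᵥ (weightedGram μ σ X *ᵥ c) = ∫ x, σ x * (∑ k, c k * X k x) ^ 2 ∂μ := by
  have hf := memLp_sum_mul hX c
  have hint (i : ι) : Integrable (fun x => c i * (σ x * X i x * ∑ k, c k * X k x)) μ :=
    ((hX i).integrable_bdd_mul_mul hf hσ hσM).const_mul (c i)
  simp_rw [dotProduct, weightedGram_mulVec_apply hX hσ hσM, ← integral_const_mul]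
  rw [← integral_finsetSum _ fun i _ => hint i]
  refine integral_congr_ae (.of_forall fun x => ?_)
  dsimp only
  rw [sq, ← mul_assoc, Finset.mul_sum _ _ (σ x * ∑ k, c k * X k x)]
  exact Finset.sum_congr rfl fun i _ => by ring

theorem weightedGram_posDef [Fintype ι] [DecidableEq ι] (hX : ∀ i, MemLp (X i) 2 μ)
    (hortho : ∀ i k, ∫ x, X i x * X k x ∂μ = if i = k then 1 else 0)
    (hσ : AEStronglyMeasurable σ μ) (hσM : ∀ᵐ x ∂μ, ‖σ x‖ ≤ M) {m : ℝ} (hm : 0 < m)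
    (hσm : ∀ᵐ x ∂μ, m ≤ σ x) : (weightedGram μ σ X).PosDef := by
  refine PosDef.of_dotProduct_mulVec_pos weightedGram_isHermitian fun c hc => ?_
  have hf := memLp_sum_mul hX c
  have hc2 : 0 < c ⬝ᵥ c := by simpa [star_trivial] using dotProduct_self_star_pos_iff.2 hc
  rw [star_trivial, dotProduct_weightedGram_mulVec hX hσ hσM]
  calc 0 < m * (c ⬝ᵥ c) := mul_pos hm hc2
    _ = ∫ x, m * (∑ k, c k * X k x) ^ 2 ∂μ := by
      rw [integral_const_mul, integral_sum_mul_sq_of_orthonormal hX hortho]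
    _ ≤ ∫ x, σ x * (∑ k, c k * X k x) ^ 2 ∂μ := by
      refine integral_mono_ae ((hf.integrable_sq).const_mul m) ?_ ?_
      · simpa only [sq, mul_assoc] using hf.integrable_bdd_mul_mul hf hσ hσM
      · filter_upwards [hσm] with x hx
        exact mul_le_mul_of_nonneg_right hx (sq_nonneg _)

end WeightedGram

section LowRank

variable {α β ι κ : Type*} [Fintype ι] [Fintype κ] {X : ι → α → ℝ} {V : κ → β → ℝ}

def lowRankFun (X : ι → α → ℝ) (S : Matrix ι κ ℝ) (V : κ → β → ℝ) (x : α) (v : β) : ℝ :=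
  ∑ k, ∑ l, X k x * S k l * V l v

theorem lowRankFun_eq_sum_mul (S : Matrix ι κ ℝ) (x : α) (v : β) :
    lowRankFun X S V x v = ∑ l, (∑ k, X k x * S k l) * V l v := by
  rw [lowRankFun, Finset.sum_comm]
  simp only [Finset.sum_mul]

theorem integral_integral_mul_lowRankFun_mul [MeasurableSpace α] [MeasurableSpace β]
    [DecidableEq κ] {μ : Measure α} {ν : Measure β} {σ : α → ℝ} {M : ℝ}
    (hX : ∀ i, MemLp (X i) 2 μ) (hσ : AEStronglyMeasurable σ μ) (hσM : ∀ᵐ x ∂μ, ‖σ x‖ ≤ M)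
    (hV : ∀ j, MemLp (V j) 2 ν)
    (hVortho : ∀ j l, ∫ v, V j v * V l v ∂ν = if j = l then 1 else 0)
    (S : Matrix ι κ ℝ) (i : ι) (j : κ) :
    ∫ x, ∫ v, X i x * σ x * lowRankFun X S V x v * V j v ∂ν ∂μ
      = (weightedGram μ σ X * S) i j := by
  have hinner (x : α) : ∫ v, X i x * σ x * lowRankFun X S V x v * V j v ∂ν
      = σ x * X i x * ∑ k, S k j * X k x := by
    simp_rw [lowRankFun_eq_sum_mul, mul_assoc (X i x * σ x)]
    rw [integral_const_mul, integral_sum_mul_of_orthonormal hV hVortho, mul_comm (X i x)]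
    simp only [mul_comm (S _ j)]
  rw [integral_congr_ae (.of_forall hinner), ← weightedGram_mulVec_apply hX hσ hσM]
  rfl

end LowRank

theorem galerkin_S_step_unique_general {Ω Ω' : Type*} [MeasurableSpace Ω] [MeasurableSpace Ω']
    (μ : Measure Ω) (ν : Measure Ω')
    (r : ℕ) (X : Fin r → Ω → ℝ) (V : Fin r → Ω' → ℝ)
    (hX : ∀ i, MemLp (X i) 2 μ) (hV : ∀ j, MemLp (V j) 2 ν)
    (hXortho : ∀ i k, ∫ x, X i x * X k x ∂μ = if i = k then 1 else 0)
    (hVortho : ∀ j l, ∫ v, V j v * V l v ∂ν = if j = l then 1 else 0)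
    (σ : Ω → ℝ) (hσmeas : Measurable σ)
    (σmin σmax : ℝ) (hσmin : 0 < σmin)
    (hbound : ∀ᵐ x ∂μ, σmin ≤ σ x ∧ σ x ≤ σmax)
    (Sstar : Matrix (Fin r) (Fin r) ℝ)
    (h : Ω → Ω' → ℝ)
    (hh : ∀ x v, h x v = ∑ i, ∑ j, X i x * Sstar i j * V j v)
    (S : Matrix (Fin r) (Fin r) ℝ)
    (hS : ∀ i j, ∑ k, (∫ x, σ x * X i x * X k x ∂μ) * S k j
      = ∫ x, ∫ v, X i x * σ x * h x v * V j v ∂ν ∂μ) :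
    S = Sstar := by
  have hσM : ∀ᵐ x ∂μ, ‖σ x‖ ≤ σmax :=
    hbound.mono fun x hx => abs_le.2 ⟨by linarith [hx.1], hx.2⟩
  have hG := weightedGram_posDef hX hXortho hσmeas.aestronglyMeasurable hσM hσmin
    (hbound.mono fun _ hx => hx.1)
  obtain rfl : h = lowRankFun X Sstar V := funext₂ hh
  have hRHS := integral_integral_mul_lowRankFun_mul hX hσmeas.aestronglyMeasurable hσM hV
    hVortho Sstar
  exact hG.isUnit.mul_left_cancel (Matrix.ext fun i j => (hS i j).trans (hRHS i j))

/-- Uniqueness for the weighted Galerkin system of the S-step: if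
`h(x,v) = Σ_{i,j} X_i(x) S*_{ij} V_j(v)` with `X`, `V` orthonormal families and the
weight `σ` bounded between positive constants, then any matrix `S` solving the
Galerkin system `Σ_k (∫ σ X_i X_k dμ) S_{kj} = ∫∫ X_i σ h V_j dν dμ` equals `S*`. -/
theorem galerkin_S_step_unique {Ω Ω' : Type*} [MeasurableSpace Ω] [MeasurableSpace Ω']
    (μ : Measure Ω) (ν : Measure Ω')
    (r : ℕ) (X : Fin r → Ω → ℝ) (V : Fin r → Ω' → ℝ)
    (hX : ∀ i, MemLp (X i) 2 μ) (hV : ∀ j, MemLp (V j) 2 ν)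
    (hXortho : ∀ i k, ∫ x, X i x * X k x ∂μ = if i = k then 1 else 0)
    (hVortho : ∀ j l, ∫ v, V j v * V l v ∂ν = if j = l then 1 else 0)
    (σ : Ω → ℝ) (hσmeas : Measurable σ)
    (σmin σmax : ℝ) (hσmin : 0 < σmin) (hminmax : σmin ≤ σmax)
    (hbound : ∀ᵐ x ∂μ, σmin ≤ σ x ∧ σ x ≤ σmax)
    (Sstar : Matrix (Fin r) (Fin r) ℝ)
    (h : Ω → Ω' → ℝ)
    (hh : ∀ x v, h x v = ∑ i, ∑ j, X i x * Sstar i j * V j v)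
    (S : Matrix (Fin r) (Fin r) ℝ)
    (hS : ∀ i j, ∑ k, (∫ x, σ x * X i x * X k x ∂μ) * S k j
      = ∫ x, ∫ v, X i x * σ x * h x v * V j v ∂ν ∂μ) :
    S = Sstar :=
  galerkin_S_step_unique_general μ ν r X V hX hV hXortho hVortho σ hσmeas σmin σmax hσmin hbound
    Sstar h hh S hS
end

section
/- Let σ^S : ℝ³ → ℝ be differentiable with σ^S(x) > 0 for all x, let σ^A, G : ℝ³ → ℝ, let Δt > 0, and let ρⁿ : ℝ³ → ℝ be twice differentiable. Define g(x, v) := −(v·∇ρⁿ(x))/σ^S(x) and the macro update ρⁿ⁺¹(x) := ρⁿ(x) + Δt·( −(1/(4π)) ∇ₓ·(∫_{S²} v g(x, v) dμ(v)) − σ^A(x) ρⁿ(x) + G(x) ). Then ρⁿ⁺¹(x) = ρⁿ(x) + Δt·( ∇ₓ·( (1/(3σ^S(x))) ∇ρⁿ(x) ) − σ^A(x) ρⁿ(x) + G(x) ) for all x; that is, the limiting macro update is exactly one forward Euler step for the diffusion equation ∂ₜρ = ∇·((1/(3σ^S))∇ρ) − σ^A ρ + G. -/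
open MeasureTheory Real

/-- The unit sphere `S² ⊂ ℝ³`. -/
abbrev UnitSphere : Type := Metric.sphere (0 : EuclideanSpace ℝ (Fin 3)) 1

/-- The surface measure on `S²` (total measure `4π`). -/
noncomputable def sphereMeasure : Measure UnitSphere :=
  (volume : Measure (EuclideanSpace ℝ (Fin 3))).toSphere

/-- The divergence `∇·F = Σᵢ ∂ᵢ Fᵢ` of a vector field on `ℝ³`. -/
noncomputable def div3 (F : EuclideanSpace ℝ (Fin 3) → EuclideanSpace ℝ (Fin 3))
    (x : EuclideanSpace ℝ (Fin 3)) : ℝ :=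
  ∑ i : Fin 3, fderiv ℝ F x (EuclideanSpace.single i 1) i

/-! The limiting flux is `∫ g(x, v) v dμ = -(1/σ^S) ∫ ⟪v, ∇ρ⟫ v dμ`, and the second moment of a
rotation-invariant finite measure `ν` on the unit sphere of an `n`-dimensional space is isotropic:
`∫ ⟪v, w⟫ v dν = (ν(S)/n) w`. Indeed `w ↦ ∫ ⟪v, w⟫² dν` is invariant under reflections, so it
depends only on `‖w‖`; summing it over an orthonormal basis gives `n ∫ ⟪v, w⟫² dν = ν(S) ‖w‖²`,
and polarization recovers the vector identity. On `S²` the constant is `4π/3`, so the flux is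
`-4π (1/(3σ^S)) ∇ρ`, and the factor `-1/(4π)` cancels once the constant leaves the divergence. -/

open Metric Module Pointwise
open scoped RealInnerProductSpace

namespace LinearIsometryEquiv

variable {E : Type*} [NormedAddCommGroup E] [NormedSpace ℝ E]

noncomputable def sphereHomeomorph (e : E ≃ₗᵢ[ℝ] E) : sphere (0 : E) 1 ≃ₜ sphere (0 : E) 1 :=
  e.toHomeomorph.subtype fun x => by simp

@[simp]
theorem coe_sphereHomeomorph_apply (e : E ≃ₗᵢ[ℝ] E) (v : sphere (0 : E) 1) :
    (e.sphereHomeomorph v : E) = e v :=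
  rfl

theorem image_set_smul (e : E ≃ₗᵢ[ℝ] E) (t : Set ℝ) (s : Set E) :
    e '' (t • s) = t • e '' s :=
  Set.image_image2_distrib_right fun c x => e.map_smul c x

theorem measurePreserving_sphereHomeomorph [MeasurableSpace E] [BorelSpace E] {μ : Measure E}
    (e : E ≃ₗᵢ[ℝ] E) (he : MeasurePreserving e μ μ) :
    MeasurePreserving e.sphereHomeomorph μ.toSphere μ.toSphere := by
  refine ⟨e.sphereHomeomorph.continuous.measurable, Measure.ext fun s hs => ?_⟩
  have hs' : MeasurableSet (e.sphereHomeomorph ⁻¹' s) := e.sphereHomeomorph.continuous.measurable hs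
  have h_image : ((↑) '' (e.sphereHomeomorph ⁻¹' s) : Set E) = e.symm '' ((↑) '' s) := by
    rw [← Homeomorph.image_symm, Set.image_image, Set.image_image]
    rfl
  rw [Measure.map_apply e.sphereHomeomorph.continuous.measurable hs, Measure.toSphere_apply' _ hs',
    Measure.toSphere_apply' _ hs, h_image, ← e.symm.image_set_smul,
    e.symm.image_eq_preimage_symm, e.symm_symm,
    he.measure_preimage_emb e.toHomeomorph.measurableEmbedding]

end LinearIsometryEquiv

theorem Continuous.integrable_of_compactSpace {X F : Type*} [TopologicalSpace X] [CompactSpace X]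
    [MeasurableSpace X] [OpensMeasurableSpace X] [NormedAddCommGroup F] {μ : Measure X}
    [IsFiniteMeasure μ] {f : X → F} (hf : Continuous f) : Integrable f μ :=
  hf.integrable_of_hasCompactSupport (.of_compactSpace f)

section SphereSecondMoment

variable {E : Type*} [NormedAddCommGroup E] [InnerProductSpace ℝ E]
  [MeasurableSpace E] {ν : Measure (sphere (0 : E) 1)}

theorem integral_inner_smul_sq (c : ℝ) (w : E) :
    ∫ v, ⟪(v : E), c • w⟫ ^ 2 ∂ν = c ^ 2 * ∫ v, ⟪(v : E), w⟫ ^ 2 ∂ν := by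
  simp only [inner_smul_right, mul_pow, integral_const_mul]

variable [BorelSpace E]

theorem integral_inner_sq_map_eq
    (hν : ∀ e : E ≃ₗᵢ[ℝ] E, MeasurePreserving e.sphereHomeomorph ν ν) (e : E ≃ₗᵢ[ℝ] E) (w : E) :
    ∫ v, ⟪(v : E), e w⟫ ^ 2 ∂ν = ∫ v, ⟪(v : E), w⟫ ^ 2 ∂ν := by
  rw [← (hν e).integral_comp' (f := e.sphereHomeomorph.toMeasurableEquiv)
    (fun v => ⟪(v : E), e w⟫ ^ 2)]
  simp

theorem integral_inner_sq_eq_of_norm_eq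
    (hν : ∀ e : E ≃ₗᵢ[ℝ] E, MeasurePreserving e.sphereHomeomorph ν ν) {w w' : E}
    (h : ‖w‖ = ‖w'‖) :
    ∫ v, ⟪(v : E), w⟫ ^ 2 ∂ν = ∫ v, ⟪(v : E), w'⟫ ^ 2 ∂ν := by
  rw [← Submodule.reflection_sub h, integral_inner_sq_map_eq hν]

variable [FiniteDimensional ℝ E] [IsFiniteMeasure ν]

theorem finrank_mul_integral_inner_sq
    (hν : ∀ e : E ≃ₗᵢ[ℝ] E, MeasurePreserving e.sphereHomeomorph ν ν) (w : E) :
    finrank ℝ E * ∫ v, ⟪(v : E), w⟫ ^ 2 ∂ν = ν.real Set.univ * ‖w‖ ^ 2 := by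
  set b := stdOrthonormalBasis ℝ E
  have h_trace : ∑ i, ∫ v, ⟪(v : E), b i⟫ ^ 2 ∂ν = ν.real Set.univ := by
    have h_parseval (v : sphere (0 : E) 1) : ∑ i, ⟪(v : E), b i⟫ ^ 2 = 1 := by
      simpa [sq, real_inner_comm] using b.sum_inner_mul_inner v v
    rw [← integral_finsetSum _ fun i _ => (by fun_prop : Continuous _).integrable_of_compactSpace]
    simp [h_parseval]
  calc finrank ℝ E * ∫ v, ⟪(v : E), w⟫ ^ 2 ∂ν
      = ∑ i, ∫ v, ⟪(v : E), ‖w‖ • b i⟫ ^ 2 ∂ν := by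
        simp [integral_inner_sq_eq_of_norm_eq hν (w := ‖w‖ • b _) (w' := w) (by simp [norm_smul])]
    _ = ν.real Set.univ * ‖w‖ ^ 2 := by
        simp only [integral_inner_smul_sq, ← Finset.mul_sum, h_trace, mul_comm]

theorem integral_inner_smul_self_eq [Nontrivial E]
    (hν : ∀ e : E ≃ₗᵢ[ℝ] E, MeasurePreserving e.sphereHomeomorph ν ν) (w : E) :
    ∫ v, ⟪(v : E), w⟫ • (v : E) ∂ν = (ν.real Set.univ / finrank ℝ E) • w := by
  set c := ν.real Set.univ / finrank ℝ E
  have h_quad (u : E) : ∫ v, ⟪(v : E), u⟫ ^ 2 ∂ν = c * ‖u‖ ^ 2 := by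
    rw [div_mul_eq_mul_div, eq_div_iff (by simp [finrank_pos.ne']), mul_comm,
      finrank_mul_integral_inner_sq hν]
  have h_polar (u v : E) : ⟪u, ⟪v, w⟫ • v⟫ = (⟪v, w + u⟫ ^ 2 - ⟪v, w - u⟫ ^ 2) / 4 := by
    simp only [inner_smul_right, inner_add_right, inner_sub_right, real_inner_comm u v]
    ring
  have h_int (u : E) : Integrable (fun v : sphere (0 : E) 1 => ⟪(v : E), u⟫ ^ 2) ν :=
    (by fun_prop : Continuous _).integrable_of_compactSpace
  refine ext_inner_left ℝ fun u => ?_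
  rw [← integral_inner (by fun_prop : Continuous _).integrable_of_compactSpace, inner_smul_right]
  simp_rw [h_polar]
  rw [integral_div, integral_sub (h_int _) (h_int _), h_quad, h_quad, norm_add_sq_real,
    norm_sub_sq_real, real_inner_comm]
  ring

end SphereSecondMoment

theorem integral_inner_smul_self_toSphere {E : Type*} [NormedAddCommGroup E]
    [InnerProductSpace ℝ E] [FiniteDimensional ℝ E] [Nontrivial E] [MeasurableSpace E]
    [BorelSpace E] (μ : Measure E) [μ.IsAddHaarMeasure]
    (hμ : ∀ e : E ≃ₗᵢ[ℝ] E, MeasurePreserving e μ μ) (w : E) :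
    ∫ v, ⟪(v : E), w⟫ • (v : E) ∂μ.toSphere = μ.real (ball 0 1) • w := by
  rw [integral_inner_smul_self_eq (fun e => e.measurePreserving_sphereHomeomorph (hμ e)),
    Measure.toSphere_real_apply_univ, mul_div_cancel_left₀ _ (by simp [finrank_pos.ne'])]

local notation "ℝ³" => EuclideanSpace ℝ (Fin 3)

theorem EuclideanSpace.volume_real_ball_fin_three :
    volume.real (ball (0 : ℝ³) 1) = 4 * π / 3 := by
  rw [measureReal_def, InnerProductSpace.volume_ball_of_dim_odd (k := 1) (by simp)]
  simp [Nat.doubleFactorial]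
  rw [ENNReal.toReal_ofReal (by positivity)]
  ring

theorem integral_inner_smul_self_sphereMeasure (w : ℝ³) :
    ∫ v : UnitSphere, ⟪(v : ℝ³), w⟫ • (v : ℝ³) ∂sphereMeasure = (4 * π / 3) • w := by
  rw [sphereMeasure, integral_inner_smul_self_toSphere _ LinearIsometryEquiv.measurePreserving,
    EuclideanSpace.volume_real_ball_fin_three]

theorem div3_const_smul (c : ℝ) (F : ℝ³ → ℝ³) (x : ℝ³) :
    div3 (fun y => c • F y) x = c * div3 F x := by
  simp [div3, ← Pi.smul_def, fderiv_const_smul_field, Finset.mul_sum]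

theorem ap_limit_forward_euler_general
    (σS : EuclideanSpace ℝ (Fin 3) → ℝ)
    (σA G : EuclideanSpace ℝ (Fin 3) → ℝ)
    (Δt : ℝ)
    (ρn : EuclideanSpace ℝ (Fin 3) → ℝ)
    (g : EuclideanSpace ℝ (Fin 3) → UnitSphere → ℝ)
    (hg : ∀ x (v : UnitSphere),
      g x v = -(inner ℝ (v : EuclideanSpace ℝ (Fin 3)) (gradient ρn x) : ℝ) / σS x)
    (ρnext : EuclideanSpace ℝ (Fin 3) → ℝ)
    (hnext : ∀ x, ρnext x = ρn x + Δt *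
      (-(1 / (4 * π)) *
          div3 (fun y => ∫ v : UnitSphere,
            g y v • (v : EuclideanSpace ℝ (Fin 3)) ∂sphereMeasure) x
        - σA x * ρn x + G x)) :
    ∀ x, ρnext x = ρn x + Δt *
      (div3 (fun y => (1 / (3 * σS y)) • gradient ρn y) x - σA x * ρn x + G x) := by
  have h_flux : (fun y => ∫ v : UnitSphere, g y v • (v : ℝ³) ∂sphereMeasure)
      = fun y => (-(4 * π)) • ((1 / (3 * σS y)) • gradient ρn y) := by
    funext y
    have h_integrand (v : UnitSphere) :
        g y v • (v : ℝ³) = (-(σS y)⁻¹) • (⟪(v : ℝ³), gradient ρn y⟫ • (v : ℝ³)) := by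
      rw [hg, smul_smul, neg_div, div_eq_inv_mul, neg_mul]
    simp_rw [h_integrand]
    rw [integral_smul, integral_inner_smul_self_sphereMeasure, smul_smul, smul_smul]
    congr 1
    ring
  intro x
  rw [hnext, h_flux, div3_const_smul]
  field_simp

/-- Asymptotic-preserving property of the first-order scheme: with the limiting micro
part `g(x,v) = −(v·∇ρⁿ(x))/σ^S(x)`, the macro update becomes exactly one forward Euler
step for the diffusion equation `∂ₜρ = ∇·((1/(3σ^S))∇ρ) − σ^A ρ + G`. -/
theorem ap_limit_forward_euler
    (σS : EuclideanSpace ℝ (Fin 3) → ℝ) (hσS_diff : Differentiable ℝ σS)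
    (hσS_pos : ∀ x, 0 < σS x)
    (σA G : EuclideanSpace ℝ (Fin 3) → ℝ)
    (Δt : ℝ) (hΔt : 0 < Δt)
    (ρn : EuclideanSpace ℝ (Fin 3) → ℝ)
    (hρn : Differentiable ℝ ρn)
    (hρn2 : Differentiable ℝ fun x => gradient ρn x)
    (g : EuclideanSpace ℝ (Fin 3) → UnitSphere → ℝ)
    (hg : ∀ x (v : UnitSphere),
      g x v = -(inner ℝ (v : EuclideanSpace ℝ (Fin 3)) (gradient ρn x) : ℝ) / σS x)
    (ρnext : EuclideanSpace ℝ (Fin 3) → ℝ)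
    (hnext : ∀ x, ρnext x = ρn x + Δt *
      (-(1 / (4 * π)) *
          div3 (fun y => ∫ v : UnitSphere,
            g y v • (v : EuclideanSpace ℝ (Fin 3)) ∂sphereMeasure) x
        - σA x * ρn x + G x)) :
    ∀ x, ρnext x = ρn x + Δt *
      (div3 (fun y => (1 / (3 * σS y)) • gradient ρn y) x - σA x * ρn x + G x) :=
  ap_limit_forward_euler_general σS σA G Δt ρn g hg ρnext hnext
end

section
/- Let σ^S : ℝ³ → ℝ be differentiable with σ^S(x) > 0 for all x, let σ^A, G : ℝ³ → ℝ, and let ρ : ℝ × ℝ³ → ℝ be differentiable in t with ρ(t, ·) twice differentiable for each t. Define g(t, x, v) := −(v·∇ₓρ(t, x))/σ^S(x). If (ρ, g) satisfies the macro equation ∂ₜρ(t, x) + (1/(4π)) ∫_{S²} v·∇ₓ g(t, x, v) dμ(v) = −σ^A(x) ρ(t, x) + G(x) for all (t, x), then ρ satisfies the limiting diffusion equation ∂ₜρ(t, x) = ∇ₓ·( (1/(3σ^S(x))) ∇ₓρ(t, x) ) − σ^A(x) ρ(t, x) + G(x) for all (t, x). -/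
open MeasureTheory Real

/-! With `H := -(σˢ)⁻¹ ∇ₓρ` the limiting micro part is `g(v) = ⟪v, H⟫`, so the velocity
average in the macro equation is `∫ ⟪v, DH(x) v⟫ dμ`. The second moments of the surface measure
are `∫ vᵢ vⱼ dμ = δᵢⱼ μ(S²)/3`, which turns this average into `(4π/3) tr DH(x) = (4π/3) ∇·H`.
The moments come from integrating `xᵢ xⱼ e^{-|x|²}` in two ways: in polar coordinates it is
`∫ vᵢ vⱼ dμ` times a radial constant, while Fubini in Cartesian coordinates shows that it
vanishes for `i ≠ j` and does not depend on `i` for `i = j`; then `∑ᵢ vᵢ² = 1` fixes the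
diagonal. -/

theorem integral_mul_exp_neg_sq : ∫ t : ℝ, t * exp (-t ^ 2) = 0 := by
  have h := integral_neg_eq_self (fun t : ℝ => t * exp (-t ^ 2)) volume
  simp only [neg_sq, neg_mul, integral_neg] at h
  linarith

theorem integral_sq_mul_exp_neg_sq_pos : 0 < ∫ t : ℝ, t ^ 2 * exp (-t ^ 2) := by
  have hint : Integrable fun t : ℝ => t ^ 2 * exp (-t ^ 2) := by
    simpa using integrable_rpow_mul_exp_neg_mul_sq (b := 1) one_pos (s := 2) (by norm_num)
  refine (integral_pos_iff_support_of_nonneg (fun t => by positivity) hint).2 ?_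
  refine lt_of_lt_of_le ?_ (measure_mono (s := Set.Ioi 0) fun t (ht : 0 < t) => ?_)
  · simp
  · simp only [Function.mem_support]
    positivity

theorem integral_eq_integral_toSphere_mul_integral_volumeIoiPow
    {E : Type*} [NormedAddCommGroup E] [NormedSpace ℝ E] [FiniteDimensional ℝ E] [Nontrivial E]
    [MeasurableSpace E] [BorelSpace E] (μ : Measure E) [μ.IsAddHaarMeasure]
    {f : E → ℝ} {φ : Metric.sphere (0 : E) 1 → ℝ} {ψ : ℝ → ℝ}
    (hf : ∀ (v : Metric.sphere (0 : E) 1) {r : ℝ}, 0 < r → f (r • (v : E)) = φ v * ψ r) :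
    ∫ x, f x ∂μ = (∫ v, φ v ∂μ.toSphere) *
      ∫ r : Set.Ioi (0 : ℝ), ψ r ∂Measure.volumeIoiPow (Module.finrank ℝ E - 1) := by
  have hpolar : ∀ x : ({0}ᶜ : Set E), f x =
      φ (homeomorphUnitSphereProd E x).1 * ψ (homeomorphUnitSphereProd E x).2 := by
    intro x
    rw [← hf _ (homeomorphUnitSphereProd E x).2.2]
    simp [smul_inv_smul₀ (norm_ne_zero_iff.2 x.2)]
  calc ∫ x, f x ∂μ = ∫ x : ({0}ᶜ : Set E), f x ∂μ.comap Subtype.val := by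
        rw [integral_subtype_comap (measurableSet_singleton 0).compl, restrict_compl_singleton]
    _ = ∫ p, φ p.1 * ψ p.2
          ∂μ.toSphere.prod (Measure.volumeIoiPow (Module.finrank ℝ E - 1)) := by
        rw [integral_congr_ae (.of_forall hpolar)]
        exact (Measure.measurePreserving_homeomorphUnitSphereProd μ).integral_comp
          (Homeomorph.measurableEmbedding _) fun p => φ p.1 * ψ p.2
    _ = _ := integral_prod_mul φ fun r : Set.Ioi (0 : ℝ) => ψ r

section EuclideanSpace

variable {ι : Type*} [Fintype ι]

theorem integral_euclideanSpace_prod_eq_prod (f : ι → ℝ → ℝ) :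
    ∫ x : EuclideanSpace ℝ ι, ∏ k, f k (x k) = ∏ k, ∫ t, f k t := by
  rw [← (PiLp.volume_preserving_toLp ι).integral_comp
    (MeasurableEquiv.toLp 2 (ι → ℝ)).measurableEmbedding]
  exact integral_fintype_prod_eq_prod f

theorem integrable_coord_mul_coord_toSphere (i j : ι) :
    Integrable (fun v : Metric.sphere (0 : EuclideanSpace ℝ ι) 1 =>
      (v : EuclideanSpace ℝ ι) i * (v : EuclideanSpace ℝ ι) j)
      (volume : Measure (EuclideanSpace ℝ ι)).toSphere :=
  (by fun_prop : Continuous _).integrable_of_hasCompactSupport (.of_compactSpace _)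

theorem integral_coord_mul_coord_toSphere_mul_radial (i j : ι) :
    (∫ v, (v : EuclideanSpace ℝ ι) i * (v : EuclideanSpace ℝ ι) j
        ∂(volume : Measure (EuclideanSpace ℝ ι)).toSphere) *
      ∫ r : Set.Ioi (0 : ℝ), (r : ℝ) ^ 2 * exp (-(r : ℝ) ^ 2)
        ∂Measure.volumeIoiPow (Fintype.card ι - 1) =
    ∫ x : EuclideanSpace ℝ ι, x i * x j * exp (-‖x‖ ^ 2) := by
  have : Nonempty ι := ⟨i⟩
  rw [integral_eq_integral_toSphere_mul_integral_volumeIoiPow volume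
    (ψ := fun r => r ^ 2 * exp (-r ^ 2)), finrank_euclideanSpace]
  intro v r hr
  simp only [PiLp.smul_apply, smul_eq_mul, norm_smul, norm_eq_of_mem_sphere v,
    Real.norm_eq_abs, abs_of_pos hr, mul_one]
  ring

theorem sum_integral_coord_mul_self_toSphere :
    ∑ k, ∫ v, (v : EuclideanSpace ℝ ι) k * (v : EuclideanSpace ℝ ι) k
        ∂(volume : Measure (EuclideanSpace ℝ ι)).toSphere =
      (volume : Measure (EuclideanSpace ℝ ι)).toSphere.real Set.univ := by
  have hsum : ∀ v : Metric.sphere (0 : EuclideanSpace ℝ ι) 1,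
      ∑ k, (v : EuclideanSpace ℝ ι) k * (v : EuclideanSpace ℝ ι) k = 1 := by
    intro v
    have h := EuclideanSpace.norm_sq_eq (v : EuclideanSpace ℝ ι)
    simp only [norm_eq_of_mem_sphere v, one_pow] at h
    simpa [← pow_two] using h.symm
  rw [← integral_finsetSum _ fun k _ => integrable_coord_mul_coord_toSphere k k]
  simp only [hsum, integral_const, smul_eq_mul, mul_one]

variable [DecidableEq ι]

theorem EuclideanSpace.trace_eq_sum_apply_single
    (A : EuclideanSpace ℝ ι →ₗ[ℝ] EuclideanSpace ℝ ι) :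
    LinearMap.trace ℝ _ A = ∑ i, A (EuclideanSpace.single i 1) i := by
  rw [LinearMap.trace_eq_matrix_trace ℝ (EuclideanSpace.basisFun ι ℝ).toBasis, Matrix.trace]
  simp [LinearMap.toMatrix_apply]

theorem EuclideanSpace.inner_map_self_eq_sum
    (A : EuclideanSpace ℝ ι →ₗ[ℝ] EuclideanSpace ℝ ι) (v : EuclideanSpace ℝ ι) :
    inner ℝ v (A v) = ∑ i, ∑ j, A (EuclideanSpace.single j 1) i * (v i * v j) := by
  have hAv : A v = ∑ j, v j • A (EuclideanSpace.single j 1) := by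
    conv_lhs => rw [← (EuclideanSpace.basisFun ι ℝ).sum_repr v]
    simp
  simp only [hAv, PiLp.inner_apply, RCLike.inner_apply, conj_trivial, WithLp.ofLp_sum,
    WithLp.ofLp_smul, Finset.sum_apply, Pi.smul_apply, smul_eq_mul, Finset.sum_mul]
  exact Finset.sum_congr rfl fun i _ => Finset.sum_congr rfl fun j _ => by ring

theorem integral_coord_mul_coord_mul_exp_neg_norm_sq (i j : ι) :
    ∫ x : EuclideanSpace ℝ ι, x i * x j * exp (-‖x‖ ^ 2) =
      if i = j then (∫ t : ℝ, t ^ 2 * exp (-t ^ 2)) * √π ^ (Fintype.card ι - 1) else 0 := by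
  set f : ι → ℝ → ℝ := fun k t => (if k = i then t else 1) * (if k = j then t else 1) * exp (-t ^ 2)
  have hprod : ∀ x : EuclideanSpace ℝ ι, x i * x j * exp (-‖x‖ ^ 2) = ∏ k, f k (x k) := by
    intro x
    rw [Finset.prod_mul_distrib, Finset.prod_mul_distrib, Finset.prod_ite_eq',
      Finset.prod_ite_eq', ← Real.exp_sum, Finset.sum_neg_distrib, EuclideanSpace.norm_sq_eq]
    simp
  simp_rw [hprod]
  rw [integral_euclideanSpace_prod_eq_prod f]
  split_ifs with hij
  · subst hij
    have hgauss : ∫ t : ℝ, exp (-t ^ 2) = √π := by simpa using integral_gaussian 1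
    have hoff : ∀ k ∈ Finset.univ.erase i, ∫ t, f k t = √π := fun k hk => by
      simp [f, Finset.ne_of_mem_erase hk, hgauss]
    rw [← Finset.mul_prod_erase _ _ (Finset.mem_univ i), Finset.prod_congr rfl hoff,
      Finset.prod_const, Finset.card_erase_of_mem (Finset.mem_univ i), Finset.card_univ]
    simp only [f, if_true, ← pow_two]
  · exact Finset.prod_eq_zero (Finset.mem_univ i) (by simpa [f, hij] using integral_mul_exp_neg_sq)

theorem integral_coord_mul_coord_toSphere (i j : ι) :
    ∫ v, (v : EuclideanSpace ℝ ι) i * (v : EuclideanSpace ℝ ι) j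
        ∂(volume : Measure (EuclideanSpace ℝ ι)).toSphere =
      if i = j then
        (volume : Measure (EuclideanSpace ℝ ι)).toSphere.real Set.univ / Fintype.card ι
      else 0 := by
  have : Nonempty ι := ⟨i⟩
  have hcard : (Fintype.card ι : ℝ) ≠ 0 := Nat.cast_ne_zero.2 Fintype.card_ne_zero
  set S := ∫ r : Set.Ioi (0 : ℝ), (r : ℝ) ^ 2 * exp (-(r : ℝ) ^ 2)
    ∂Measure.volumeIoiPow (Fintype.card ι - 1)
  set D := (∫ t : ℝ, t ^ 2 * exp (-t ^ 2)) * √π ^ (Fintype.card ι - 1)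
  have hmoment : ∀ k l : ι, (∫ v, (v : EuclideanSpace ℝ ι) k * (v : EuclideanSpace ℝ ι) l
      ∂(volume : Measure (EuclideanSpace ℝ ι)).toSphere) * S = if k = l then D else 0 :=
    fun k l => (integral_coord_mul_coord_toSphere_mul_radial k l).trans
      (integral_coord_mul_coord_mul_exp_neg_norm_sq k l)
  have htotal : (volume : Measure (EuclideanSpace ℝ ι)).toSphere.real Set.univ * S =
      Fintype.card ι * D := by
    rw [← sum_integral_coord_mul_self_toSphere, Finset.sum_mul]
    simp [hmoment]
  have hD : D ≠ 0 :=
    mul_ne_zero integral_sq_mul_exp_neg_sq_pos.ne' (pow_ne_zero _ (by positivity))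
  have hS : S ≠ 0 := by
    rintro hS
    rw [hS, mul_zero] at htotal
    exact mul_ne_zero hcard hD htotal.symm
  split_ifs with hij
  · subst hij
    have hdiag := hmoment i i
    rw [if_pos rfl] at hdiag
    rw [eq_div_iff hcard]
    refine mul_right_cancel₀ hS ?_
    linear_combination (Fintype.card ι : ℝ) * hdiag - htotal
  · exact (mul_eq_zero.1 ((hmoment i j).trans (if_neg hij))).resolve_right hS

theorem integral_inner_map_self_toSphere (A : EuclideanSpace ℝ ι →ₗ[ℝ] EuclideanSpace ℝ ι) :
    ∫ v, inner ℝ (v : EuclideanSpace ℝ ι) (A v)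
        ∂(volume : Measure (EuclideanSpace ℝ ι)).toSphere =
      (volume : Measure (EuclideanSpace ℝ ι)).toSphere.real Set.univ / Fintype.card ι *
        LinearMap.trace ℝ _ A := by
  simp_rw [EuclideanSpace.inner_map_self_eq_sum]
  rw [integral_finsetSum _ fun i _ => integrable_finsetSum _ fun j _ =>
    (integrable_coord_mul_coord_toSphere i j).const_mul _]
  simp_rw [integral_finsetSum _ fun j _ => (integrable_coord_mul_coord_toSphere _ j).const_mul _,
    integral_const_mul, integral_coord_mul_coord_toSphere, mul_ite, mul_zero, Finset.sum_ite_eq,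
    Finset.mem_univ, if_true, EuclideanSpace.trace_eq_sum_apply_single, Finset.mul_sum]
  exact Finset.sum_congr rfl fun i _ => mul_comm _ _

end EuclideanSpace

theorem sphereMeasure_real_univ : sphereMeasure.real Set.univ = 4 * π := by
  rw [sphereMeasure, Measure.toSphere_real_apply_univ, finrank_euclideanSpace_fin, Measure.real,
    EuclideanSpace.volume_ball_fin_three, ENNReal.ofReal_one, one_pow, one_mul,
    ENNReal.toReal_ofReal (by positivity)]
  ring

theorem div3_eq_trace_fderiv (F : EuclideanSpace ℝ (Fin 3) → EuclideanSpace ℝ (Fin 3))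
    (x : EuclideanSpace ℝ (Fin 3)) :
    div3 F x = LinearMap.trace ℝ _ (fderiv ℝ F x).toLinearMap :=
  (EuclideanSpace.trace_eq_sum_apply_single _).symm

theorem inner_gradient_inner_right {F : Type*} [NormedAddCommGroup F] [InnerProductSpace ℝ F]
    [CompleteSpace F] {H : F → F} {x : F} (hH : DifferentiableAt ℝ H x) (v : F) :
    inner ℝ v (gradient (fun y => inner ℝ v (H y)) x) = inner ℝ v (fderiv ℝ H x v) := by
  rw [real_inner_comm, inner_gradient_left, fderiv_inner_apply ℝ (differentiableAt_const v) hH]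
  simp

theorem diffusion_limit_of_macro_equation_general
    (σS : EuclideanSpace ℝ (Fin 3) → ℝ) (hσS_diff : Differentiable ℝ σS)
    (hσS_pos : ∀ x, 0 < σS x)
    (σA G : EuclideanSpace ℝ (Fin 3) → ℝ)
    (ρ : ℝ → EuclideanSpace ℝ (Fin 3) → ℝ)
    (hρ_xx : ∀ t, Differentiable ℝ fun x => gradient (ρ t) x)
    (g : ℝ → EuclideanSpace ℝ (Fin 3) → UnitSphere → ℝ)
    (hg : ∀ t x (v : UnitSphere),
      g t x v = -(inner ℝ (v : EuclideanSpace ℝ (Fin 3)) (gradient (ρ t) x) : ℝ) / σS x)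
    (hmacro : ∀ t x,
      deriv (fun s => ρ s x) t
        + (1 / (4 * π)) * ∫ v : UnitSphere,
            (inner ℝ (v : EuclideanSpace ℝ (Fin 3))
              (gradient (fun y => g t y v) x) : ℝ) ∂sphereMeasure
      = -σA x * ρ t x + G x) :
    ∀ t x,
      deriv (fun s => ρ s x) t
        = div3 (fun y => (1 / (3 * σS y)) • gradient (ρ t) y) x
          - σA x * ρ t x + G x := by
  intro t x
  set H : EuclideanSpace ℝ (Fin 3) → EuclideanSpace ℝ (Fin 3) :=
    fun y => -(σS y)⁻¹ • gradient (ρ t) y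
  set T := LinearMap.trace ℝ _ (fderiv ℝ H x).toLinearMap
  have hH : DifferentiableAt ℝ H x := ((hσS_diff x).inv (hσS_pos x).ne').neg.smul (hρ_xx t x)
  have hg_inner : ∀ v : UnitSphere,
      (fun y => g t y v) = fun y => inner ℝ (v : EuclideanSpace ℝ (Fin 3)) (H y) :=
    fun v => funext fun y => by rw [hg, real_inner_smul_right]; ring
  have hflux : ∫ v : UnitSphere, (inner ℝ (v : EuclideanSpace ℝ (Fin 3))
      (gradient (fun y => g t y v) x) : ℝ) ∂sphereMeasure = 4 * π / 3 * T := by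
    simp_rw [hg_inner, inner_gradient_inner_right hH]
    rw [← sphereMeasure_real_univ]
    exact integral_inner_map_self_toSphere _
  have hfield : (fun y => (1 / (3 * σS y)) • gradient (ρ t) y) = fun y => (-(1 / 3) : ℝ) • H y :=
    funext fun y => by rw [smul_smul]; congr 1; ring
  have hdiv : div3 (fun y => (1 / (3 * σS y)) • gradient (ρ t) y) x = -(1 / 3) * T := by
    rw [hfield, div3_eq_trace_fderiv, fderiv_fun_const_smul hH,
      ContinuousLinearMap.toLinearMap_smul, map_smul, smul_eq_mul]
  have hscale : 1 / (4 * π) * (4 * π / 3 * T) = T / 3 := by field_simp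
  have hmacro_tx := hmacro t x
  rw [hflux, hscale] at hmacro_tx
  rw [hdiv]
  linarith

/-- The formal `ε → 0` diffusion limit of the macro-micro decomposition: when the micro
part takes its limiting form `g = −(v·∇ₓρ)/σ^S`, the macro equation reduces to the
diffusion equation `∂ₜρ = ∇ₓ·((1/(3σ^S))∇ₓρ) − σ^A ρ + G`. -/
theorem diffusion_limit_of_macro_equation
    (σS : EuclideanSpace ℝ (Fin 3) → ℝ) (hσS_diff : Differentiable ℝ σS)
    (hσS_pos : ∀ x, 0 < σS x)
    (σA G : EuclideanSpace ℝ (Fin 3) → ℝ)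
    (ρ : ℝ → EuclideanSpace ℝ (Fin 3) → ℝ)
    (hρ_t : ∀ x, Differentiable ℝ fun t => ρ t x)
    (hρ_x : ∀ t, Differentiable ℝ (ρ t))
    (hρ_xx : ∀ t, Differentiable ℝ fun x => gradient (ρ t) x)
    (g : ℝ → EuclideanSpace ℝ (Fin 3) → UnitSphere → ℝ)
    (hg : ∀ t x (v : UnitSphere),
      g t x v = -(inner ℝ (v : EuclideanSpace ℝ (Fin 3)) (gradient (ρ t) x) : ℝ) / σS x)
    (hmacro : ∀ t x,
      deriv (fun s => ρ s x) t
        + (1 / (4 * π)) * ∫ v : UnitSphere,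
            (inner ℝ (v : EuclideanSpace ℝ (Fin 3))
              (gradient (fun y => g t y v) x) : ℝ) ∂sphereMeasure
      = -σA x * ρ t x + G x) :
    ∀ t x,
      deriv (fun s => ρ s x) t
        = div3 (fun y => (1 / (3 * σS y)) • gradient (ρ t) y) x
          - σA x * ρ t x + G x :=
  diffusion_limit_of_macro_equation_general σS hσS_diff hσS_pos σA G ρ hρ_xx g hg hmacro
end
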